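/- Let (X,T) be a TDS, let p ∈ X satisfy T^t p = p for some t ≥ 1, and let q ∈ X be such that the pair (p,q) is mean proximal. Then for all integers n₁, n₂ ≥ 0 and all 0 ≤ j ≤ t−1, the pair (T^{n₁ t + j} q, T^{n₂ t + j} q) is mean proximal; consequently the set of mean proximal pairs is dense in X_j × X_j, where X_j is the closure of {T^{n t + j} q : n ≥ 0}. -/
import Mathlib

open Filter Metric Set

/-- Birkhoff average of the distance between the orbits of `x` and `y`. -/
noncomputable def birkhoffAvg {X : Type*} [PseudoMetricSpace X]
    (T : X → X) (x y : X) (N : ℕ) : ℝ :=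
  (∑ k ∈ Finset.range N, dist (T^[k] x) (T^[k] y)) / N

/-- A pair `(x,y)` is mean proximal if
`liminf_{N→∞} (1/N) ∑_{k<N} d(T^k x, T^k y) = 0`. -/
def MeanProximalPair {X : Type*} [PseudoMetricSpace X] (T : X → X) (x y : X) : Prop :=
  liminf (birkhoffAvg T x y) atTop = 0

/-- `(X,T)` is mean sensitive. -/
def MeanSensitive {X : Type*} [PseudoMetricSpace X] (T : X → X) : Prop :=
  ∃ δ > (0 : ℝ), ∀ x : X, ∀ ε > (0 : ℝ), ∃ y ∈ ball x ε,
    δ < limsup (birkhoffAvg T x y) atTop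

/-- `K` is a mean Li-Yorke set with modulus `η`. -/
def MeanLiYorkeSetMod {X : Type*} [PseudoMetricSpace X]
    (T : X → X) (η : ℝ) (K : Set X) : Prop :=
  ∀ x ∈ K, ∀ y ∈ K, x ≠ y →
    MeanProximalPair T x y ∧ η ≤ limsup (birkhoffAvg T x y) atTop

lemma birkhoffAvg_nonneg {X : Type*} [PseudoMetricSpace X] (T : X → X) (x y : X) (N : ℕ) :
    0 ≤ birkhoffAvg T x y N :=
  div_nonneg (Finset.sum_nonneg fun _ _ => dist_nonneg) (Nat.cast_nonneg N)

lemma liminf_eq_zero_of_frequently_le {u : ℕ → ℝ} (h0 : ∀ N, 0 ≤ u N)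
    (h : ∀ ε > (0 : ℝ), ∃ᶠ N in atTop, u N ≤ ε) : liminf u atTop = 0 := by
  have hb : IsBoundedUnder (· ≥ ·) atTop u := isBoundedUnder_of ⟨0, fun N => h0 N⟩
  refine le_antisymm (le_of_forall_pos_le_add fun ε hε => ?_)
    (le_liminf_of_le (IsCoboundedUnder.of_frequently_le (h 1 one_pos))
      (Eventually.of_forall h0))
  simpa using liminf_le_of_frequently_le (h ε hε) hb

lemma frequently_le_of_meanProximal {X : Type*} [MetricSpace X] [CompactSpace X] {T : X → X}
    {x y : X} (h : MeanProximalPair T x y) {ε : ℝ} (hε : 0 < ε) :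
    ∃ᶠ N in atTop, birkhoffAvg T x y N < ε := by
  have hbdd : Bornology.IsBounded (univ : Set X) := isCompact_univ.isBounded
  have hdiam : ∀ a b : X, dist a b ≤ Metric.diam (univ : Set X) := fun a b =>
    dist_le_diam_of_mem hbdd (mem_univ a) (mem_univ b)
  have hub : ∀ N, birkhoffAvg T x y N ≤ Metric.diam (univ : Set X) := by
    intro N
    rcases Nat.eq_zero_or_pos N with hN | hN
    · subst hN; simpa [birkhoffAvg] using Metric.diam_nonneg
    · have hN0 : (0:ℝ) < N := by exact_mod_cast hN
      rw [birkhoffAvg, div_le_iff₀ hN0]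
      calc (∑ k ∈ Finset.range N, dist (T^[k] x) (T^[k] y))
          ≤ ∑ _k ∈ Finset.range N, Metric.diam (univ : Set X) :=
            Finset.sum_le_sum fun k _ => hdiam _ _
        _ = Metric.diam (univ : Set X) * N := by
            simp [Finset.sum_const, mul_comm]
  have hb : IsBoundedUnder (· ≤ ·) atTop (birkhoffAvg T x y) :=
    isBoundedUnder_of ⟨Metric.diam (univ : Set X), hub⟩
  exact frequently_lt_of_liminf_lt hb.isCoboundedUnder_ge (by rw [h]; exact hε)

/-- If `T^t p = p` (`t ≥ 1`) and `(p,q)` is mean proximal, then all pairs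
`(T^{n₁t+j} q, T^{n₂t+j} q)` are mean proximal, and hence the set of mean proximal
pairs is dense in `X_j × X_j`, where `X_j` is the orbit closure of `q` along `t·ℕ + j`. -/
theorem meanProximal_dense_in_Xj
    {X : Type*} [MetricSpace X] [CompactSpace X] (T : X → X) (hT : Continuous T)
    (p q : X) (t : ℕ) (ht : 1 ≤ t) (hp : T^[t] p = p)
    (hpq : MeanProximalPair T p q) :
    (∀ j < t, ∀ n₁ n₂ : ℕ,
      MeanProximalPair T (T^[n₁ * t + j] q) (T^[n₂ * t + j] q)) ∧
    (∀ j < t,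
      (closure {z : X | ∃ n : ℕ, T^[n * t + j] q = z}) ×ˢ
        (closure {z : X | ∃ n : ℕ, T^[n * t + j] q = z}) ⊆
      closure {z : X × X |
        z ∈ (closure {w : X | ∃ n : ℕ, T^[n * t + j] q = w}) ×ˢ
             (closure {w : X | ∃ n : ℕ, T^[n * t + j] q = w}) ∧
        MeanProximalPair T z.1 z.2}) := by
  -- S N = partial sums of distances along the orbit of (p,q)
  set S : ℕ → ℝ := fun N => ∑ k ∈ Finset.range N, dist (T^[k] p) (T^[k] q) with hS
  have hSnn : ∀ N, 0 ≤ S N := fun N => Finset.sum_nonneg fun _ _ => dist_nonneg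
  have hSmono : Monotone S := fun M N hMN =>
    Finset.sum_le_sum_of_subset_of_nonneg (Finset.range_subset_range.mpr hMN)
      (fun _ _ _ => dist_nonneg)
  -- p is fixed by T^[n*t]
  have hfix : ∀ m n : ℕ, T^[m + n * t] p = T^[m] p := by
    intro m n
    rw [Function.iterate_add_apply, mul_comm, Function.iterate_mul]
    congr 1
    exact Function.iterate_fixed hp n
  have main : ∀ j, j < t → ∀ n₁ n₂ : ℕ,
      MeanProximalPair T (T^[n₁ * t + j] q) (T^[n₂ * t + j] q) := by
    intro j hj n₁ n₂
    set a := n₁ * t + j with ha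
    set b := n₂ * t + j with hb
    -- key pointwise bound
    have hkey : ∀ M : ℕ, birkhoffAvg T (T^[a] q) (T^[b] q) M ≤ (S (M + a) + S (M + b)) / M := by
      intro M
      have hsum : (∑ k ∈ Finset.range M, dist (T^[k] (T^[a] q)) (T^[k] (T^[b] q)))
          ≤ S (M + a) + S (M + b) := by
        have hterm : ∀ k, dist (T^[k] (T^[a] q)) (T^[k] (T^[b] q))
            ≤ dist (T^[k + a] p) (T^[k + a] q) + dist (T^[k + b] p) (T^[k + b] q) := by
          intro k
          have h1 : T^[k] (T^[a] q) = T^[k + a] q := (Function.iterate_add_apply T k a q).symm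
          have h2 : T^[k] (T^[b] q) = T^[k + b] q := (Function.iterate_add_apply T k b q).symm
          have h3 : T^[k + a] p = T^[k + b] p := by
            have e1 : k + a = (k + j) + n₁ * t := by omega
            have e2 : k + b = (k + j) + n₂ * t := by omega
            rw [e1, e2, hfix, hfix]
          rw [h1, h2]
          calc dist (T^[k + a] q) (T^[k + b] q)
              ≤ dist (T^[k + a] q) (T^[k + a] p) + dist (T^[k + a] p) (T^[k + b] q) :=
                dist_triangle _ _ _
            _ = dist (T^[k + a] p) (T^[k + a] q) + dist (T^[k + b] p) (T^[k + b] q) := by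
                rw [h3, dist_comm (T^[k+a] q)]
        calc (∑ k ∈ Finset.range M, dist (T^[k] (T^[a] q)) (T^[k] (T^[b] q)))
            ≤ ∑ k ∈ Finset.range M,
                (dist (T^[k + a] p) (T^[k + a] q) + dist (T^[k + b] p) (T^[k + b] q)) :=
              Finset.sum_le_sum fun k _ => hterm k
          _ = (∑ k ∈ Finset.range M, dist (T^[k + a] p) (T^[k + a] q))
              + ∑ k ∈ Finset.range M, dist (T^[k + b] p) (T^[k + b] q) :=
              Finset.sum_add_distrib
          _ ≤ S (M + a) + S (M + b) := by
              gcongr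
              · calc (∑ k ∈ Finset.range M, dist (T^[k + a] p) (T^[k + a] q))
                    ≤ ∑ k ∈ Finset.range (M + a), dist (T^[k] p) (T^[k] q) := by
                      rw [show (∑ k ∈ Finset.range M, dist (T^[k + a] p) (T^[k + a] q))
                          = ∑ k ∈ Finset.Ico a (M + a), dist (T^[k] p) (T^[k] q) from ?_]
                      · exact Finset.sum_le_sum_of_subset_of_nonneg
                          (by intro k hk; simp at hk ⊢; omega) (fun _ _ _ => dist_nonneg)
                      · rw [Finset.sum_Ico_eq_sum_range]
                        simp [add_comm]
                  _ = S (M + a) := rfl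
              · calc (∑ k ∈ Finset.range M, dist (T^[k + b] p) (T^[k + b] q))
                    ≤ ∑ k ∈ Finset.range (M + b), dist (T^[k] p) (T^[k] q) := by
                      rw [show (∑ k ∈ Finset.range M, dist (T^[k + b] p) (T^[k + b] q))
                          = ∑ k ∈ Finset.Ico b (M + b), dist (T^[k] p) (T^[k] q) from ?_]
                      · exact Finset.sum_le_sum_of_subset_of_nonneg
                          (by intro k hk; simp at hk ⊢; omega) (fun _ _ _ => dist_nonneg)
                      · rw [Finset.sum_Ico_eq_sum_range]
                        simp [add_comm]
                  _ = S (M + b) := rfl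
      rcases Nat.eq_zero_or_pos M with hM | hM
      · subst hM; simp [birkhoffAvg]
      · have hM0 : (0:ℝ) < M := by exact_mod_cast hM
        rw [birkhoffAvg]
        gcongr
    -- conclude mean proximality
    refine liminf_eq_zero_of_frequently_le (birkhoffAvg_nonneg _ _ _) fun ε hε => ?_
    set c := a + b with hc
    have hfreq := frequently_le_of_meanProximal hpq (by positivity : (0:ℝ) < ε / 4)
    rw [frequently_atTop] at hfreq ⊢
    intro M₀
    obtain ⟨N, hN1, hN2⟩ := hfreq (M₀ + 2 * c + 1)
    set M := N - c with hMdef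
    have hNM : N = M + c := by omega
    have hMge : M ≥ M₀ := by omega
    have hM : 0 < M := by omega
    refine ⟨M, hMge, ?_⟩
    have hM0 : (0:ℝ) < M := by exact_mod_cast hM
    have hN0 : (0:ℝ) < N := by
      have : 0 < N := by omega
      exact_mod_cast this
    have hcast : (N:ℝ) ≤ 2 * M := by
      have : N ≤ 2 * M := by omega
      exact_mod_cast this
    have h1 : S (M + a) ≤ S N := hSmono (by omega)
    have h2 : S (M + b) ≤ S N := hSmono (by omega)
    have hSN : S N / N < ε / 4 := hN2
    have hSNnn : 0 ≤ S N := hSnn N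
    have hSlt : S N < ε / 4 * N := (div_lt_iff₀ hN0).mp hSN
    calc birkhoffAvg T (T^[a] q) (T^[b] q) M ≤ (S (M + a) + S (M + b)) / M := hkey M
      _ ≤ (S N + S N) / M := by gcongr
      _ ≤ ε := by rw [div_le_iff₀ hM0]; nlinarith
  refine ⟨main, fun j hj => ?_⟩
  have hsub : {z : X | ∃ n : ℕ, T^[n * t + j] q = z} ×ˢ {z : X | ∃ n : ℕ, T^[n * t + j] q = z} ⊆
      {z : X × X |
        z ∈ (closure {w : X | ∃ n : ℕ, T^[n * t + j] q = w}) ×ˢ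
             (closure {w : X | ∃ n : ℕ, T^[n * t + j] q = w}) ∧
        MeanProximalPair T z.1 z.2} := by
    rintro ⟨z₁, z₂⟩ ⟨⟨n₁, rfl⟩, ⟨n₂, rfl⟩⟩
    exact ⟨⟨subset_closure ⟨n₁, rfl⟩, subset_closure ⟨n₂, rfl⟩⟩, main j hj n₁ n₂⟩
  have hcl := closure_mono hsub
  rw [closure_prod_eq] at hcl
  exact hcl
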